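/- Let d ≥ 1, let X and X' be aperiodic minimal subshifts over nonempty finite alphabets, and let h : SX → SX' be a homeomorphism that maps the canonical transversal onto the canonical transversal, i.e. h(ι(X)) = ι'(X'). Let c be the cocycle of h. Then there exists M > 0 such that for every ω ∈ X and every n ∈ ℤ^d, ‖c(ι(ω), n)‖ ≤ M·‖n‖. -/

import Mathlib

open Filter Topology

abbrev Zd (d : ℕ) := Fin d → ℤ
abbrev Rd (d : ℕ) := EuclideanSpace ℝ (Fin d)

def toRd {d : ℕ} (n : Zd d) : Rd d := WithLp.toLp 2 (fun i => (n i : ℝ))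

def shift {d : ℕ} {A : Type*} (n : Zd d) (ω : Zd d → A) : Zd d → A := fun k => ω (k - n)

structure IsSubshift {d : ℕ} {A : Type*} [TopologicalSpace A] (X : Set (Zd d → A)) : Prop where
  nonempty : X.Nonempty
  closed : IsClosed X
  shift_mem : ∀ n : Zd d, ∀ ω ∈ X, shift n ω ∈ X

def IsMinimal {d : ℕ} {A : Type*} [TopologicalSpace A] (X : Set (Zd d → A)) : Prop :=
  ∀ ω ∈ X, X ⊆ closure {ω' | ∃ n : Zd d, ω' = shift n ω}

def IsAperiodic {d : ℕ} {A : Type*} (X : Set (Zd d → A)) : Prop :=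
  ∀ ω ∈ X, ∀ n : Zd d, shift n ω = ω → n = 0

def suspRel {d : ℕ} {A : Type*} [TopologicalSpace A] (X : Set (Zd d → A)) :
    X × Rd d → X × Rd d → Prop :=
  fun p q => ∃ n : Zd d, (q.1 : Zd d → A) = shift n (p.1 : Zd d → A) ∧ q.2 = p.2 - toRd n

abbrev Susp {d : ℕ} {A : Type*} [TopologicalSpace A] (X : Set (Zd d → A)) :=
  Quot (suspRel X)

instance {d : ℕ} {A : Type*} [TopologicalSpace A] (X : Set (Zd d → A)) :
    VAdd (Rd d) (Susp X) where
  vadd t := Quot.lift (fun p => Quot.mk (suspRel X) (p.1, p.2 + t))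
    (fun p q hpq => by
      obtain ⟨n, h1, h2⟩ := hpq
      exact Quot.sound ⟨n, h1, by rw [h2, sub_add_eq_add_sub]⟩)

def iota {d : ℕ} {A : Type*} [TopologicalSpace A] (X : Set (Zd d → A)) : X → Susp X :=
  fun ω => Quot.mk _ (ω, 0)

def box (d : ℕ) (n : ℕ) : Set (Zd d) := {k | ∀ i, |k i| ≤ (n : ℤ)}

noncomputable def complexity {d : ℕ} {A : Type*} (X : Set (Zd d → A)) (n : ℕ) : ℕ :=
  Set.ncard ((fun ω => (fun k : box d n => ω k.1)) '' X)

noncomputable def repetitivity {d : ℕ} {A : Type*} (X : Set (Zd d → A)) (n : ℕ) : ℝ :=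
  sInf {C : ℝ | 0 ≤ C ∧ ∀ ω ∈ X, ∀ ω₀ ∈ X, ∃ k : Zd d,
    ‖toRd k‖ ≤ C ∧ ∀ j ∈ box d n, shift k ω j = ω₀ j}

def IsCocycleFor {d : ℕ} {A A' : Type*} [TopologicalSpace A] [TopologicalSpace A']
    {X : Set (Zd d → A)} {X' : Set (Zd d → A')}
    (h : Susp X ≃ₜ Susp X') (c : Susp X × Rd d → Rd d) : Prop :=
  ∀ (T : Susp X) (x : Rd d), h (x +ᵥ T) = c (T, x) +ᵥ h T


/-!
Since `X` is compact, so is `SX`, and a continuous map `f : SX → SX'` is uniformly continuous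
along `ℝ^d`-orbits: there is `ε > 0` such that a displacement of length `< ε` in `SX` is sent to a
displacement of length `< 1` in `SX'`. The reason is that a flow box `X' × B(z, 1/2)` embeds in
`SX'` and splits into the open flow boxes `C × B(z, 1/2)` over the clopen cylinder sets `C` of `X'`,
so a connected set inside it moves only in the `ℝ^d`-direction. Cutting a vector `x` into
`⌊‖x‖/ε⌋ + 1` equal pieces gives `‖c(T, x)‖ ≤ ‖x‖/ε + 1`, and the constant is absorbed since
`‖n‖ ≥ 1` for `n ∈ ℤ^d \ {0}`.
-/

open Metric

lemma norm_sub_lt_one_of_mem_ball {E : Type*} [SeminormedAddCommGroup E] {a b z : E}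
    (ha : a ∈ ball z (1 / 2)) (hb : b ∈ ball z (1 / 2)) : ‖a - b‖ < 1 := by
  rw [← dist_eq_norm]
  linarith [dist_triangle_right a b z, mem_ball.1 ha, mem_ball.1 hb]

lemma exists_norm_le_nsmul_vadd_eq {V α β : Type*} [SeminormedAddCommGroup V] [AddAction V α]
    [AddAction V β] {f : α → β} {u : V} (hu : ∀ a, ∃ w : V, ‖w‖ < 1 ∧ f (u +ᵥ a) = w +ᵥ f a)
    (N : ℕ) (a : α) : ∃ w : V, ‖w‖ ≤ N ∧ f ((N • u) +ᵥ a) = w +ᵥ f a := by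
  induction N generalizing a with
  | zero => exact ⟨0, by simp, by simp⟩
  | succ N ih =>
    obtain ⟨w₁, hw₁, hfw₁⟩ := hu a
    obtain ⟨w₂, hw₂, hfw₂⟩ := ih (u +ᵥ a)
    refine ⟨w₂ + w₁, ?_, ?_⟩
    · push_cast
      linarith [norm_add_le w₂ w₁]
    · rw [succ_nsmul, add_vadd, hfw₂, hfw₁, add_vadd]

lemma exists_norm_le_div_add_one_vadd_eq {V α β : Type*} [SeminormedAddCommGroup V]
    [NormedSpace ℝ V] [AddAction V α] [AddAction V β] {f : α → β} {ε : ℝ} (hε : 0 < ε)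
    (hf : ∀ a (u : V), ‖u‖ < ε → ∃ w : V, ‖w‖ < 1 ∧ f (u +ᵥ a) = w +ᵥ f a) (a : α) (x : V) :
    ∃ w : V, ‖w‖ ≤ ‖x‖ / ε + 1 ∧ f (x +ᵥ a) = w +ᵥ f a := by
  set N := ⌊‖x‖ / ε⌋₊ + 1
  have hN : (0 : ℝ) < N := by positivity
  have hstep : ‖(N : ℝ)⁻¹ • x‖ < ε := by
    rw [norm_smul, norm_inv, Real.norm_natCast, inv_mul_lt_iff₀ hN, ← div_lt_iff₀ hε]
    exact_mod_cast Nat.lt_floor_add_one (‖x‖ / ε)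
  obtain ⟨w, hw, hfw⟩ := exists_norm_le_nsmul_vadd_eq (hf · _ hstep) N a
  rw [← Nat.cast_smul_eq_nsmul ℝ N, smul_smul, mul_inv_cancel₀ hN.ne', one_smul] at hfw
  refine ⟨w, hw.trans ?_, hfw⟩
  push_cast [N]
  linarith [Nat.floor_le (div_nonneg (norm_nonneg x) hε.le)]

section Lattice

variable {d : ℕ}

lemma shift_zero {A : Type*} (ω : Zd d → A) : shift 0 ω = ω := by
  funext k; simp [shift]

lemma shift_shift {A : Type*} (m n : Zd d) (ω : Zd d → A) :
    shift m (shift n ω) = shift (m + n) ω := by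
  funext k; simp only [shift, sub_sub]

@[simp] lemma toRd_zero : toRd (0 : Zd d) = 0 := by ext i; simp [toRd]

@[simp] lemma toRd_add (m n : Zd d) : toRd (m + n) = toRd m + toRd n := by ext i; simp [toRd]

@[simp] lemma toRd_neg (n : Zd d) : toRd (-n) = -toRd n := by ext i; simp [toRd]

lemma one_le_norm_toRd {n : Zd d} (hn : n ≠ 0) : 1 ≤ ‖toRd n‖ := by
  obtain ⟨i, hi⟩ := Function.ne_iff.1 hn
  calc (1 : ℝ) ≤ |(n i : ℝ)| := by exact_mod_cast Int.one_le_abs hi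
    _ = ‖toRd n i‖ := by simp [toRd]
    _ ≤ ‖toRd n‖ := PiLp.norm_apply_le _ i

lemma exists_norm_sub_toRd_le_sqrt (y : Rd d) : ∃ k : Zd d, ‖y - toRd k‖ ≤ √d := by
  refine ⟨fun i => round (y i), ?_⟩
  rw [← mem_closedBall_zero_iff, EuclideanSpace.closedBall_zero_eq _ (Real.sqrt_nonneg _),
    Set.mem_ofPred_eq, Real.sq_sqrt (Nat.cast_nonneg d)]
  calc ∑ i, (y - toRd fun i => round (y i)) i ^ 2 ≤ ∑ _i : Fin d, (1 : ℝ) := by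
        gcongr with i
        have := abs_sub_round (y i)
        simp only [toRd, PiLp.sub_apply]
        nlinarith [abs_nonneg (y i - round (y i)), sq_abs (y i - round (y i))]
    _ = d := by simp

end Lattice

lemma suspRel_equivalence {d : ℕ} {A : Type*} [TopologicalSpace A] (X : Set (Zd d → A)) :
    Equivalence (suspRel X) where
  refl p := ⟨0, (shift_zero _).symm, by simp⟩
  symm := by
    rintro p q ⟨n, h1, h2⟩
    exact ⟨-n, by rw [h1, shift_shift, neg_add_cancel, shift_zero], by rw [h2, toRd_neg]; abel⟩
  trans := by
    rintro p q r ⟨n, h1, h2⟩ ⟨m, h3, h4⟩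
    exact ⟨m + n, by rw [h3, h1, shift_shift], by rw [h4, h2, toRd_add]; abel⟩

namespace Susp

variable {d : ℕ} {A : Type*} [TopologicalSpace A] {X : Set (Zd d → A)}

lemma mk_eq_mk_iff {p q : X × Rd d} :
    Quot.mk (suspRel X) p = Quot.mk (suspRel X) q ↔ suspRel X p q :=
  (suspRel_equivalence X).quot_mk_eq_iff p q

lemma vadd_mk (t : Rd d) (p : X × Rd d) :
    t +ᵥ Quot.mk (suspRel X) p = Quot.mk (suspRel X) (p.1, p.2 + t) := rfl

instance : AddAction (Rd d) (Susp X) where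
  zero_vadd T := by
    induction T using Quot.ind
    rw [vadd_mk, add_zero]
  add_vadd a b T := by
    induction T using Quot.ind
    rw [vadd_mk, vadd_mk, vadd_mk, add_assoc, add_comm a]

lemma mk_shift (hX : IsSubshift X) (n : Zd d) (p : X × Rd d) :
    Quot.mk (suspRel X) (⟨shift n p.1, hX.shift_mem n _ p.1.2⟩, p.2 - toRd n) =
      Quot.mk (suspRel X) p :=
  (Quot.sound ⟨n, rfl, rfl⟩).symm

lemma eq_of_vadd_eq_vadd (hXap : IsAperiodic X) {a b : Rd d} {T : Susp X}
    (hab : a +ᵥ T = b +ᵥ T) : a = b := by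
  induction T using Quot.ind with | mk p => ?_
  obtain ⟨n, h1, h2⟩ := mk_eq_mk_iff.1 hab
  obtain rfl : n = 0 := hXap _ p.1.2 n h1.symm
  simpa using h2.symm

lemma eq_of_mk_eq_of_norm_sub_lt_one {p q : X × Rd d} (hpq : ‖p.2 - q.2‖ < 1)
    (h : Quot.mk (suspRel X) p = Quot.mk (suspRel X) q) : p = q := by
  obtain ⟨n, h1, h2⟩ := mk_eq_mk_iff.1 h
  have hn : ‖toRd n‖ < 1 := by rwa [h2, sub_sub_cancel] at hpq
  obtain rfl : n = 0 := by_contra fun hn0 => (one_le_norm_toRd hn0).not_gt hn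
  rw [shift_zero] at h1
  rw [toRd_zero, sub_zero] at h2
  exact Prod.ext (Subtype.ext h1.symm) h2.symm

lemma isOpenMap_mk (hX : IsSubshift X) : IsOpenMap (Quot.mk (suspRel X)) := by
  intro W hW
  let act (n : Zd d) (p : X × Rd d) : X × Rd d :=
    (⟨shift n p.1, hX.shift_mem n _ p.1.2⟩, p.2 - toRd n)
  have hact (n : Zd d) : Continuous (act n) :=
    (((continuous_pi fun k => continuous_apply (k - n)).comp
      (continuous_subtype_val.comp continuous_fst)).subtype_mk _).prodMk
      (continuous_snd.sub continuous_const)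
  have hpre : Quot.mk (suspRel X) ⁻¹' (Quot.mk (suspRel X) '' W) = ⋃ n, act n ⁻¹' W := by
    ext p
    simp only [Set.mem_preimage, Set.mem_image, Set.mem_iUnion]
    constructor
    · rintro ⟨q, hq, hqp⟩
      obtain ⟨n, h1, h2⟩ := mk_eq_mk_iff.1 hqp.symm
      exact ⟨n, by convert hq using 1; exact Prod.ext (Subtype.ext h1.symm) h2.symm⟩
    · rintro ⟨n, hn⟩
      exact ⟨act n p, hn, mk_shift hX n p⟩
  rw [isOpen_coinduced, hpre]
  exact isOpen_iUnion fun n => hW.preimage (hact n)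

lemma exists_mk_eq_of_norm_le_sqrt (hX : IsSubshift X) (T : Susp X) :
    ∃ p : X × Rd d, ‖p.2‖ ≤ √d ∧ Quot.mk (suspRel X) p = T := by
  induction T using Quot.ind with | mk p => ?_
  obtain ⟨k, hk⟩ := exists_norm_sub_toRd_le_sqrt p.2
  exact ⟨(⟨shift k p.1, hX.shift_mem k _ p.1.2⟩, p.2 - toRd k), hk, mk_shift hX k p⟩

lemma compactSpace [CompactSpace A] (hX : IsSubshift X) : CompactSpace (Susp X) := by
  have : CompactSpace X := isCompact_iff_compactSpace.1 hX.closed.isCompact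
  have hK : IsCompact (Set.univ ×ˢ closedBall (0 : Rd d) √d) :=
    (isCompact_univ (X := X)).prod (isCompact_closedBall _ _)
  have hcover : Quot.mk (suspRel X) '' (Set.univ ×ˢ closedBall (0 : Rd d) √d) = Set.univ := by
    refine Set.eq_univ_of_forall fun T => ?_
    obtain ⟨p, hp, rfl⟩ := exists_mk_eq_of_norm_le_sqrt hX T
    exact ⟨p, ⟨trivial, mem_closedBall_zero_iff.2 hp⟩, rfl⟩
  exact ⟨hcover ▸ hK.image continuous_quot_mk⟩

instance : ContinuousVAdd (Rd d) (Susp X) where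
  continuous_vadd := by
    refine (isQuotientMap_quot_mk (r := suspRel X)).continuous_lift_prod_right
      (g := fun q : Rd d × Susp X => q.1 +ᵥ q.2) ?_
    exact continuous_quot_mk.comp <| (continuous_fst.comp continuous_snd).prodMk
      ((continuous_snd.comp continuous_snd).add continuous_fst)

-- The radius `1/2` makes `(ψ, x) ↦ [ψ, x]` injective on `X × ball z (1/2)`: two lifts of a point
-- differ by a nonzero vector of `ℤ^d`.
variable (X) in
def flowBox (C : Set X) (z : Rd d) : Set (Susp X) :=
  Quot.mk (suspRel X) '' (C ×ˢ ball z (1 / 2))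

lemma isOpen_flowBox (hX : IsSubshift X) {C : Set X} (hC : IsOpen C) (z : Rd d) :
    IsOpen (flowBox X C z) :=
  isOpenMap_mk hX _ (hC.prod isOpen_ball)

lemma mem_of_mk_mem_flowBox {C : Set X} {z : Rd d} {p : X × Rd d} (hp : p.2 ∈ ball z (1 / 2))
    (h : Quot.mk (suspRel X) p ∈ flowBox X C z) : p.1 ∈ C := by
  obtain ⟨q, hq, hqp⟩ := h
  rw [eq_of_mk_eq_of_norm_sub_lt_one (norm_sub_lt_one_of_mem_ball hq.2 hp) hqp] at hq
  exact hq.1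

lemma disjoint_flowBox_compl (C : Set X) (z : Rd d) :
    Disjoint (flowBox X C z) (flowBox X Cᶜ z) := by
  refine Set.disjoint_left.2 ?_
  rintro _ ⟨p, hp, rfl⟩ hpc
  exact mem_of_mk_mem_flowBox hp.2 hpc hp.1

lemma subset_flowBox_or_subset_flowBox_compl (hX : IsSubshift X) {S : Set (Susp X)}
    (hS : IsPreconnected S) {z : Rd d} (hSz : S ⊆ flowBox X Set.univ z) {C : Set X}
    (hC : IsClopen C) : S ⊆ flowBox X C z ∨ S ⊆ flowBox X Cᶜ z := by
  refine hS.subset_or_subset (isOpen_flowBox hX hC.isOpen z)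
    (isOpen_flowBox hX hC.compl.isOpen z) (disjoint_flowBox_compl C z) fun T hT => ?_
  obtain ⟨p, hp, rfl⟩ := hSz hT
  by_cases hpC : p.1 ∈ C
  · exact Or.inl ⟨p, ⟨hpC, hp.2⟩, rfl⟩
  · exact Or.inr ⟨p, ⟨hpC, hp.2⟩, rfl⟩

lemma eventually_vadd_mem_flowBox {Y : Type*} [TopologicalSpace Y] [AddAction (Rd d) Y]
    [ContinuousVAdd (Rd d) Y] (hX : IsSubshift X) {f : Y → Susp X} (hf : Continuous f) (y : Y) :
    ∀ᶠ q : Rd d × Y in 𝓝 (0, y), ∃ z : Rd d,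
      ∀ v ∈ closedBall (0 : Rd d) ‖q.1‖, f (v +ᵥ q.2) ∈ flowBox X Set.univ z := by
  obtain ⟨p, hp⟩ := Quot.exists_rep (f y)
  have hopen : (fun q : Rd d × Y => f (q.1 +ᵥ q.2)) ⁻¹' flowBox X Set.univ p.2 ∈ 𝓝 (0, y) := by
    refine (isOpen_flowBox hX isOpen_univ p.2).preimage (hf.comp continuous_vadd)
      |>.mem_nhds ?_
    rw [Set.mem_preimage, Function.comp_apply, zero_vadd, ← hp]
    exact ⟨p, ⟨trivial, mem_ball_self one_half_pos⟩, rfl⟩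
  obtain ⟨U, hU, V, hV, hUV⟩ := mem_nhds_prod_iff.1 hopen
  obtain ⟨δ, hδ, hδU⟩ := Metric.mem_nhds_iff.1 hU
  filter_upwards [prod_mem_nhds (ball_mem_nhds 0 hδ) hV] with q hq
  refine ⟨p.2, fun v hv => hUV (show (v, q.2) ∈ U ×ˢ V from ⟨hδU ?_, hq.2⟩)⟩
  exact mem_ball_zero_iff.2 ((mem_closedBall_zero_iff.1 hv).trans_lt (mem_ball_zero_iff.1 hq.1))

variable [DiscreteTopology A]

lemma exists_norm_lt_one_vadd_eq_of_isPreconnected (hX : IsSubshift X) {S : Set (Susp X)}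
    (hS : IsPreconnected S) {z : Rd d} (hSz : S ⊆ flowBox X Set.univ z) {T₀ T₁ : Susp X}
    (hT₀ : T₀ ∈ S) (hT₁ : T₁ ∈ S) : ∃ w : Rd d, ‖w‖ < 1 ∧ T₁ = w +ᵥ T₀ := by
  obtain ⟨p₀, hp₀, rfl⟩ := hSz hT₀
  obtain ⟨p₁, hp₁, rfl⟩ := hSz hT₁
  have hcoord (k : Zd d) : p₁.1.1 k = p₀.1.1 k := by
    let C : Set X := {ψ | ψ.1 k = p₀.1.1 k}
    have hC : IsClopen C :=
      (isClopen_discrete {p₀.1.1 k}).preimage ((continuous_apply k).comp continuous_subtype_val)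
    rcases subset_flowBox_or_subset_flowBox_compl hX hS hSz hC with hSC | hSC
    · exact mem_of_mk_mem_flowBox hp₁.2 (hSC hT₁)
    · exact absurd (rfl : p₀.1.1 k = p₀.1.1 k) (mem_of_mk_mem_flowBox hp₀.2 (hSC hT₀))
  refine ⟨p₁.2 - p₀.2, norm_sub_lt_one_of_mem_ball hp₁.2 hp₀.2, ?_⟩
  rw [vadd_mk, add_sub_cancel, ← Subtype.ext (funext hcoord)]

lemma exists_pos_forall_norm_lt_exists_vadd_eq {Y : Type*} [TopologicalSpace Y] [CompactSpace Y]
    [AddAction (Rd d) Y] [ContinuousVAdd (Rd d) Y] (hX : IsSubshift X) {f : Y → Susp X}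
    (hf : Continuous f) :
    ∃ ε > 0, ∀ (y : Y) (u : Rd d), ‖u‖ < ε → ∃ w : Rd d, ‖w‖ < 1 ∧ f (u +ᵥ y) = w +ᵥ f y := by
  have hunif := isCompact_univ.eventually_forall_of_forall_eventually
    (P := fun (u : Rd d) y =>
      ∃ z, ∀ v ∈ closedBall (0 : Rd d) ‖u‖, f (v +ᵥ y) ∈ flowBox X Set.univ z)
    fun y _ => eventually_vadd_mem_flowBox hX hf y
  obtain ⟨ε, hε, hεu⟩ := Metric.eventually_nhds_iff.1 hunif
  refine ⟨ε, hε, fun y u hu => ?_⟩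
  obtain ⟨z, hz⟩ := hεu (by rwa [dist_zero_right]) y trivial
  have hS : IsPreconnected ((fun v : Rd d => f (v +ᵥ y)) '' closedBall 0 ‖u‖) :=
    (convex_closedBall _ _).isPreconnected.image _
      (hf.comp (continuous_id.vadd continuous_const)).continuousOn
  exact exists_norm_lt_one_vadd_eq_of_isPreconnected hX hS (Set.image_subset_iff.2 hz)
    ⟨0, mem_closedBall_self (norm_nonneg u), congrArg f (zero_vadd _ y)⟩
    ⟨u, mem_closedBall_zero_iff.2 le_rfl, rfl⟩

end Susp

namespace IsCocycleFor

variable {d : ℕ} {A A' : Type*} [TopologicalSpace A] [TopologicalSpace A']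
  {X : Set (Zd d → A)} {X' : Set (Zd d → A')} {h : Susp X ≃ₜ Susp X'}
  {c : Susp X × Rd d → Rd d}

lemma eq_of_apply_vadd_eq (hX'ap : IsAperiodic X') (hc : IsCocycleFor h c) {T : Susp X}
    {x w : Rd d} (hw : h (x +ᵥ T) = w +ᵥ h T) : c (T, x) = w :=
  Susp.eq_of_vadd_eq_vadd hX'ap ((hc T x).symm.trans hw)

lemma apply_zero (hX'ap : IsAperiodic X') (hc : IsCocycleFor h c) (T : Susp X) :
    c (T, 0) = 0 :=
  hc.eq_of_apply_vadd_eq hX'ap (by rw [zero_vadd, zero_vadd])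

lemma exists_pos_norm_le_div_add_one [CompactSpace A] [DiscreteTopology A']
    (hX : IsSubshift X) (hX' : IsSubshift X') (hX'ap : IsAperiodic X') (hc : IsCocycleFor h c) :
    ∃ ε > 0, ∀ (T : Susp X) (x : Rd d), ‖c (T, x)‖ ≤ ‖x‖ / ε + 1 := by
  have := Susp.compactSpace hX
  obtain ⟨ε, hε, hstep⟩ := Susp.exists_pos_forall_norm_lt_exists_vadd_eq hX' h.continuous
  refine ⟨ε, hε, fun T x => ?_⟩
  obtain ⟨w, hw, hfw⟩ := exists_norm_le_div_add_one_vadd_eq hε hstep T x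
  rwa [hc.eq_of_apply_vadd_eq hX'ap hfw]

end IsCocycleFor

theorem cocycle_lipschitz_on_transversal_general
    {d : ℕ}
    {A A' : Type*} [Fintype A] [TopologicalSpace A]
    [TopologicalSpace A'] [DiscreteTopology A']
    (X : Set (Zd d → A)) (X' : Set (Zd d → A'))
    (hX : IsSubshift X) (hX' : IsSubshift X')
    (hX'ap : IsAperiodic X')
    (h : Susp X ≃ₜ Susp X')
    (c : Susp X × Rd d → Rd d) (hc : IsCocycleFor h c) :
    ∃ M : ℝ, 0 < M ∧ ∀ (ω : X) (n : Zd d), ‖c (iota X ω, toRd n)‖ ≤ M * ‖toRd n‖ := by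
  obtain ⟨ε, hε, hc_le⟩ := hc.exists_pos_norm_le_div_add_one hX hX' hX'ap
  refine ⟨1 / ε + 1, by positivity, fun ω n => ?_⟩
  rcases eq_or_ne n 0 with rfl | hn
  · rw [toRd_zero, hc.apply_zero hX'ap, norm_zero, mul_zero]
  · have hn1 := one_le_norm_toRd hn
    calc ‖c (iota X ω, toRd n)‖ ≤ ‖toRd n‖ / ε + 1 := hc_le _ _
      _ ≤ (1 / ε + 1) * ‖toRd n‖ := by rw [add_mul, one_div_mul_eq_div, one_mul]; linarith

theorem cocycle_lipschitz_on_transversal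
    {d : ℕ} (hd : 1 ≤ d)
    {A A' : Type*} [Fintype A] [Nonempty A] [TopologicalSpace A] [DiscreteTopology A]
    [Fintype A'] [Nonempty A'] [TopologicalSpace A'] [DiscreteTopology A']
    (X : Set (Zd d → A)) (X' : Set (Zd d → A'))
    (hX : IsSubshift X) (hX' : IsSubshift X')
    (hXmin : IsMinimal X) (hX'min : IsMinimal X')
    (hXap : IsAperiodic X) (hX'ap : IsAperiodic X')
    (h : Susp X ≃ₜ Susp X')
    (htrans : ⇑h '' Set.range (iota X) = Set.range (iota X'))
    (c : Susp X × Rd d → Rd d) (hc : IsCocycleFor h c) :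
    ∃ M : ℝ, 0 < M ∧ ∀ (ω : X) (n : Zd d), ‖c (iota X ω, toRd n)‖ ≤ M * ‖toRd n‖ :=
  cocycle_lipschitz_on_transversal_general X X' hX hX' hX'ap h c hc
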